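/- Every perfect non-bipartite 2-coloring of Ci_∞(D_n) whose outer degrees b, c satisfy b + c = 2n + 1 is periodic with period length 2n + 1, i.e., φ(i) = φ(i + 2n + 1) for all integers i. -/

import Mathlib

/-!
Let `u` be the indicator of color 1. Since `b + c = 2n + 1`, every closed neighbourhood
`i + {0, ±1, ±3, …, ±(2n-1)}` contains exactly `b` vertices of color 1. Comparing the closed
neighbourhoods of two vertices at distance 2 shows that `u j + u (j + 2n - 1)` has period `2n + 1`.
This sum is not identically 1, for then the shift by `2n - 1` would exchange the colors and give
`b = 2n + 1 - b`. Hence `u x₀ = u (x₀ + 2n - 1)` for some `x₀`, so `u` is constant on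
`x₀ + (2n + 1)ℤ`. The difference `u (j + 2n + 1) - u j` changes sign under `j ↦ j + 2n - 1` and
vanishes on `x₀ + (2n + 1)ℤ`, so it vanishes on `x₀ + (2n + 1)ℤ + (2n - 1)ℤ = ℤ`.
-/

/-- Neighborhood of `i` in the infinite circulant graph `Ci_∞(D_n)`,
`D_n = {±1, ±3, …, ±(2n-1)}`: the integers at odd distance less than `2n` from `i`. -/
noncomputable def nbrs (n : ℕ) (i : ℤ) : Finset ℤ :=
  (Finset.Icc (i - (2*(n:ℤ) - 1)) (i + (2*(n:ℤ) - 1))).filter (fun j => Odd (j - i))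

/-- `φ` is a perfect 2-coloring of `Ci_∞(D_n)` with outer degrees `(b, c)`:
every vertex of color 0 (black) has exactly `b` neighbors of color 1 (white), and
every vertex of color 1 has exactly `c` neighbors of color 0. -/
def Perfect2 (n : ℕ) (φ : ℤ → Fin 2) (b c : ℕ) : Prop :=
  (∀ i, φ i = 0 → ((nbrs n i).filter (fun j => φ j = 1)).card = b) ∧
  (∀ i, φ i = 1 → ((nbrs n i).filter (fun j => φ j = 0)).card = c)

open Finset Function

lemma mem_nbrs {n : ℕ} {i j : ℤ} :
    j ∈ nbrs n i ↔ i - (2 * n - 1) ≤ j ∧ j ≤ i + (2 * n - 1) ∧ (j - i) % 2 = 1 := by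
  simp only [nbrs, mem_filter, mem_Icc, Int.odd_iff]
  omega

lemma card_nbrs (n : ℕ) (i : ℤ) : #(nbrs n i) = 2 * n := by
  induction n with
  | zero =>
    rw [Finset.card_eq_zero, Finset.eq_empty_iff_forall_notMem]
    intro j hj
    rw [mem_nbrs] at hj
    omega
  | succ n ih =>
    have hsucc :
        nbrs (n + 1) i = insert (i - (2 * n + 1)) (insert (i + (2 * n + 1)) (nbrs n i)) := by
      ext j
      simp only [mem_nbrs, mem_insert]
      push_cast
      omega
    have hright : i + (2 * n + 1) ∉ nbrs n i := by
      rw [mem_nbrs]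
      omega
    have hleft : i - (2 * n + 1) ∉ insert (i + (2 * n + 1)) (nbrs n i) := by
      simp only [mem_insert, mem_nbrs]
      omega
    rw [hsucc, card_insert_of_notMem hleft, card_insert_of_notMem hright, ih]
    ring

lemma nbrs_add (n : ℕ) (i t : ℤ) : nbrs n (i + t) = (nbrs n i).map (addRightEmbedding t) := by
  ext j
  simp only [mem_map, addRightEmbedding_apply, mem_nbrs]
  exact ⟨fun h => ⟨j - t, by omega, by ring⟩, by rintro ⟨a, ha, rfl⟩; omega⟩

lemma sum_nbrs_add {M : Type*} [AddCommMonoid M] (f : ℤ → M) (n : ℕ) (i t : ℤ) :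
    ∑ j ∈ nbrs n (i + t), f j = ∑ j ∈ nbrs n i, f (j + t) := by
  rw [nbrs_add, sum_map]
  rfl

lemma nbrs_add_two {n : ℕ} (hn : 0 < n) (i : ℤ) :
    nbrs n (i + 2) = insert (i + (2 * n + 1)) ((nbrs n i).erase (i - (2 * n - 1))) := by
  ext j
  simp only [mem_nbrs, mem_insert, mem_erase]
  omega

lemma sum_nbrs_add_two {M : Type*} [AddCommMonoid M] (f : ℤ → M) {n : ℕ} (hn : 0 < n) (i : ℤ) :
    ∑ j ∈ nbrs n (i + 2), f j + f (i - (2 * n - 1)) =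
      ∑ j ∈ nbrs n i, f j + f (i + (2 * n + 1)) := by
  have hmem : i - (2 * n - 1) ∈ nbrs n i := by
    rw [mem_nbrs]
    omega
  have hnotMem : i + (2 * n + 1) ∉ (nbrs n i).erase (i - (2 * n - 1)) := by
    simp only [mem_erase, mem_nbrs]
    omega
  rw [nbrs_add_two hn, sum_insert hnotMem, ← add_sum_erase _ f hmem]
  abel

lemma fin_two_eq_zero_or_eq_one (x : Fin 2) : x = 0 ∨ x = 1 := by
  fin_cases x <;> simp

lemma sum_val_eq_card_filter_eq_one {α : Type*} (s : Finset α) (φ : α → Fin 2) :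
    ∑ j ∈ s, (φ j : ℤ) = #{j ∈ s | φ j = 1} := by
  rw [← sum_boole]
  refine sum_congr rfl fun j _ => ?_
  rcases fin_two_eq_zero_or_eq_one (φ j) with h | h <;> simp [h]

lemma card_filter_eq_zero_add_card_filter_eq_one {α : Type*} (s : Finset α) (φ : α → Fin 2) :
    #{j ∈ s | φ j = 0} + #{j ∈ s | φ j = 1} = #s := by
  have hne : ∀ j ∈ s, φ j ≠ 0 ↔ φ j = 1 := fun j _ =>
    ⟨Fin.eq_one_of_ne_zero _, fun h => h ▸ one_ne_zero⟩
  rw [← filter_congr hne, card_filter_add_card_filter_not]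

lemma Perfect2.sum_nbrs_add_self {n b c : ℕ} {φ : ℤ → Fin 2} (hφ : Perfect2 n φ b c)
    (hbc : b + c = 2 * n + 1) (i : ℤ) : ∑ j ∈ nbrs n i, (φ j : ℤ) + φ i = b := by
  rw [sum_val_eq_card_filter_eq_one]
  rcases fin_two_eq_zero_or_eq_one (φ i) with h | h
  · simp [h, hφ.1 i h]
  · have hsplit := card_filter_eq_zero_add_card_filter_eq_one (nbrs n i) φ
    rw [hφ.2 i h, card_nbrs] at hsplit
    simp only [h, Fin.val_one, Nat.cast_one]
    omega

lemma periodic_add_comp_add_of_sum_nbrs_add_self {n : ℕ} (hn : 0 < n) {f : ℤ → ℤ} {b : ℤ}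
    (hsum : ∀ i, ∑ j ∈ nbrs n i, f j + f i = b) :
    Periodic (fun j => f j + f (j + (2 * n - 1))) (2 * n + 1) := by
  intro j
  have hstep := sum_nbrs_add_two f hn (j + (2 * n - 1))
  have hleft := hsum (j + (2 * n - 1))
  have hright := hsum (j + (2 * n - 1) + 2)
  have e₁ : j + (2 * n - 1) + 2 = j + (2 * n + 1) := by ring
  have e₂ : j + (2 * n - 1) - (2 * n - 1) = j := by ring
  have e₃ : j + (2 * n - 1) + (2 * n + 1) = j + (2 * n + 1) + (2 * n - 1) := by ring
  rw [e₁, e₂, e₃] at hstep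
  rw [e₁] at hright
  dsimp only
  linarith

lemma exists_add_eq_of_sum_nbrs_add_self {n : ℕ} {f : ℤ → ℤ} (hf : ∀ x, f x = 0 ∨ f x = 1)
    {b : ℤ} (hsum : ∀ i, ∑ j ∈ nbrs n i, f j + f i = b) (t : ℤ) : ∃ x, f (x + t) = f x := by
  by_contra! hne
  have hflip : ∀ x, f (x + t) = 1 - f x := fun x => by
    have := hne x
    rcases hf x with h | h <;> rcases hf (x + t) with h' | h' <;> omega
  have hshift := hsum (0 + t)
  rw [sum_nbrs_add] at hshift
  simp only [hflip, sum_sub_distrib, sum_const, card_nbrs, nsmul_eq_mul, mul_one] at hshift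
  have h0 := hsum 0
  push_cast at hshift
  omega

lemma periodic_of_periodic_add_comp_add {f : ℤ → ℤ} (hf : ∀ x, f x = 0 ∨ f x = 1) {p q : ℤ}
    (hpq : IsCoprime p q) (hs : Periodic (fun x => f x + f (x + q)) p)
    (hx₀ : ∃ x₀, f (x₀ + q) = f x₀) : Periodic f p := by
  obtain ⟨x₀, hx₀⟩ := hx₀
  set d : ℤ → ℤ := fun x => f (x + p) - f x with hd
  have hanti : Antiperiodic d q := fun x => by
    have := hs x
    simp only [hd] at this ⊢
    rw [add_right_comm]
    linarith
  have hconst : ∀ m : ℤ, f (x₀ + m * p) = f x₀ := fun m => by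
    have h : f (x₀ + m * p) + f (x₀ + m * p + q) = f x₀ + f (x₀ + q) := by
      simpa using (hs.int_mul m) x₀
    rcases hf x₀ with h₁ | h₁ <;> rcases hf (x₀ + m * p) with h₂ | h₂ <;>
      rcases hf (x₀ + m * p + q) with h₃ | h₃ <;> omega
  have hd_zero : ∀ m : ℤ, d (x₀ + m * p) = 0 := fun m => by
    simp only [hd]
    rw [show x₀ + m * p + p = x₀ + (m + 1) * p by ring, hconst, hconst, sub_self]
  obtain ⟨r, s, hrs⟩ := hpq
  intro i
  have hi : i = x₀ + ((i - x₀) * r) * p + ((i - x₀) * s) * q := by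
    linear_combination (x₀ - i) * hrs
  have h := hanti.add_int_mul_eq (x := x₀ + ((i - x₀) * r) * p) ((i - x₀) * s)
  rw [Int.cast_id, hd_zero, mul_zero, ← hi] at h
  simpa [hd, sub_eq_zero] using h

theorem period_plus_general (n b c : ℕ) (hn : 0 < n)
    (hbc : b + c = 2*n + 1)
    (φ : ℤ → Fin 2) (hφ : Perfect2 n φ b c) :
    ∀ i : ℤ, φ (i + (2*(n:ℤ) + 1)) = φ i := by
  set u : ℤ → ℤ := fun i => (φ i : ℤ)
  have hu : ∀ x, u x = 0 ∨ u x = 1 := fun x => by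
    rcases fin_two_eq_zero_or_eq_one (φ x) with h | h <;> simp [u, h]
  have hsum : ∀ i, ∑ j ∈ nbrs n i, u j + u i = b := hφ.sum_nbrs_add_self hbc
  have hcoprime : IsCoprime (2 * (n : ℤ) + 1) (2 * n - 1) := ⟨n, -(n + 1), by ring⟩
  have hper : Periodic u (2 * (n : ℤ) + 1) :=
    periodic_of_periodic_add_comp_add hu hcoprime
      (periodic_add_comp_add_of_sum_nbrs_add_self hn hsum)
      (exists_add_eq_of_sum_nbrs_add_self hu hsum _)
  exact fun i => Fin.val_injective (Nat.cast_injective (R := ℤ) (hper i))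

/-- Every perfect non-bipartite 2-coloring with `b + c = 2n+1` has period `2n+1`. -/
theorem period_plus (n b c : ℕ) (hn : 0 < n) (hb : 0 < b) (hc : 0 < c)
    (hbc : b + c = 2*n + 1)
    (φ : ℤ → Fin 2) (hφ : Perfect2 n φ b c)
    (hnonbip : ¬ (∀ i j : ℤ, Even i → Odd j → φ i ≠ φ j)) :
    ∀ i : ℤ, φ (i + (2*(n:ℤ) + 1)) = φ i :=
  period_plus_general n b c hn hbc φ hφ
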